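/- arXiv:2508.10651 — 4 statements merged into one kernel-verified Lean document; each statement's English description precedes it below -/
import Mathlib

section
/- For pointed Kripke models (M,w) and (N,v), if N,v satisfies the graded modal d-type realized by (M,w), then there is a graded d-bisimulation between (M,w) and (N,v). -/
/-- Formulas of graded modal logic (GML) over proposition symbols `P`. -/
inductive GML (P : Type) : Type
  | bot : GML P
  | prop : P → GML P
  | neg : GML P → GML P
  | and : GML P → GML P → GML P
  | or : GML P → GML P → GML P
  | dia : GML P → GML P
  | gdia : ℕ → GML P → GML P

/-- A Kripke model over proposition symbols `P` with node set `V`: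
a finite labeled directed graph, given by a (finite) successor function and a labeling. -/
structure Kripke (P V : Type) where
  succ : V → Finset V
  label : V → P → Prop

/-- Satisfaction of GML formulas at a node. -/
def Kripke.Sat {P V : Type} (M : Kripke P V) : GML P → V → Prop
  | .bot, _ => False
  | .prop p, v => M.label v p
  | .neg φ, v => ¬ M.Sat φ v
  | .and φ ψ, v => M.Sat φ v ∧ M.Sat ψ v
  | .or φ ψ, v => M.Sat φ v ∨ M.Sat ψ v
  | .dia φ, v => ∃ u ∈ M.succ v, M.Sat φ u
  | .gdia k φ, v => k ≤ {u | u ∈ M.succ v ∧ M.Sat φ u}.ncard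

/-- Modal depth of a GML formula. -/
def GML.md {P : Type} : GML P → ℕ
  | .bot => 0
  | .prop _ => 0
  | .neg φ => φ.md
  | .and φ ψ => max φ.md ψ.md
  | .or φ ψ => max φ.md ψ.md
  | .dia φ => φ.md + 1
  | .gdia _ φ => φ.md + 1

/-- `Z` is a graded `d`-bisimulation (a decreasing chain `Z 0 ⊇ ... ⊇ Z d` with
propositional harmony and back-and-forth matching of sequences of distinct successors). -/
def IsGradedBisim {P V W : Type} (M : Kripke P V) (N : Kripke P W) (d : ℕ)
    (Z : ℕ → V → W → Prop) : Prop :=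
  (∀ i j, i ≤ j → j ≤ d → ∀ a b, Z j a b → Z i a b) ∧
  (∀ i, i ≤ d → ∀ a b, Z i a b → ∀ p, M.label a p ↔ N.label b p) ∧
  (∀ i, 0 < i → i ≤ d → ∀ a b, Z i a b →
    ((∀ (k : ℕ) (f : Fin k → V), Function.Injective f → (∀ j, f j ∈ M.succ a) →
        ∃ g : Fin k → W, Function.Injective g ∧ (∀ j, g j ∈ N.succ b) ∧
          ∀ j, Z (i - 1) (f j) (g j)) ∧
     (∀ (k : ℕ) (g : Fin k → W), Function.Injective g → (∀ j, g j ∈ N.succ b) →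
        ∃ f : Fin k → V, Function.Injective f ∧ (∀ j, f j ∈ M.succ a) ∧
          ∀ j, Z (i - 1) (f j) (g j))))

/-- There is a graded `d`-bisimulation between the pointed models `(M,w)` and `(N,v)`. -/
def GradedBisimilar {P V W : Type} (M : Kripke P V) (N : Kripke P W)
    (w : V) (v : W) (d : ℕ) : Prop :=
  ∃ Z, IsGradedBisim M N d Z ∧ Z d w v

def listAnd {P : Type} : List (GML P) → GML P
  | [] => .neg .bot
  | φ :: l => .and φ (listAnd l)

def listOr {P : Type} : List (GML P) → GML P
  | [] => .bot
  | φ :: l => .or φ (listOr l)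

/-- `◊^{=k} φ`, i.e. `◊^{≥k} φ ∧ ¬ ◊^{≥k+1} φ`. -/
def diaEq {P : Type} (k : ℕ) (φ : GML P) : GML P := .and (.gdia k φ) (.neg (.gdia (k+1) φ))

/-- `□ φ`, i.e. `¬ ◊ ¬ φ`. -/
def boxF {P : Type} (φ : GML P) : GML P := .neg (.dia (.neg φ))

/-- Graded modal 0-types: the formulas `⋀_{p ∈ Ψ} p ∧ ⋀_{p ∉ Ψ} ¬p` for `Ψ ⊆ P`. -/
def gType0 (P : Type) [Fintype P] [DecidableEq P] : Set (GML P) :=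
  {φ | ∃ Ψ : Finset P, φ =
    listAnd (((Finset.univ : Finset P).toList).map
      fun p => if p ∈ Ψ then GML.prop p else GML.neg (GML.prop p))}

/-- Graded modal `d`-types: `σ ∧ ⋀_{τ ∈ I} ◊^{=count τ} τ ∧ □ ⋁_{τ ∈ I} τ` with `σ` a
0-type, `I` a finite set of `d`-types and `count : I → ℤ₊`. -/
def gType (P : Type) [Fintype P] [DecidableEq P] : ℕ → Set (GML P)
  | 0 => gType0 P
  | (d+1) => {φ | ∃ σ ∈ gType0 P, ∃ L : List (GML P),
      (∀ τ ∈ L, τ ∈ gType P d) ∧ L.Nodup ∧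
      ∃ count : GML P → ℕ, (∀ τ ∈ L, 0 < count τ) ∧
      φ = .and σ (.and (listAnd (L.map fun τ => diaEq (count τ) τ))
            (boxF (listOr L)))}

/-!
Relate two nodes at level `i` when they satisfy the same formulas of modal depth at most `i`.

A shared graded `d`-type forces this at level `d`, by induction on `d`: two `d`-types holding at a
common node hold at the same nodes of every model, so the conjuncts `◊^{=count τ} τ` of a shared
`(d+1)`-type fix, for each depth-`d` theory, the number of successors realizing it.

The relation is a graded bisimulation: as there are finitely many propositions, every node realizes
an `(i-1)`-type, which then axiomatizes its depth-`(i-1)` theory. So nodes with equal depth-`i`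
theories have equally many successors in each depth-`(i-1)` theory class, and the injections of
successors can be chosen class by class.
-/

open Finset Function

section FiberwiseEmbedding

variable {α β γ : Type*} [DecidableEq γ] {s : Finset α} {t : Finset β} {p : α → γ} {q : β → γ}

theorem Finset.fintypeCard_subtype_eq_card_filter (r : α → Prop) [DecidablePred r] :
    Fintype.card {a : s // r a} = #{a ∈ s | r a} := by
  rw [Fintype.card_subtype, univ_eq_attach, filter_attach r, card_map, card_attach]

theorem Finset.exists_embedding_of_card_fiber_le
    (h : ∀ c, #{a ∈ s | p a = c} ≤ #{b ∈ t | q b = c}) :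
    ∃ e : s ↪ t, ∀ a, q (e a) = p a := by
  have E : ∀ c, {a : s // p a = c} ↪ {b : t // q b = c} := fun c =>
    Classical.choice <| Embedding.nonempty_of_card_le <| by
      rw [fintypeCard_subtype_eq_card_filter (fun a => p a = c),
        fintypeCard_subtype_eq_card_filter (fun b => q b = c)]
      exact h c
  exact ⟨(Equiv.sigmaFiberEquiv fun a : s => p a).symm.toEmbedding.trans
    ((Embedding.sigmaMap (Embedding.refl γ) E).trans
      (Equiv.sigmaFiberEquiv fun b : t => q b).toEmbedding), fun a => (E (p a) ⟨a, rfl⟩).2⟩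

theorem Finset.card_filter_le_of_card_fiber_le
    (h : ∀ c, #{a ∈ s | p a = c} ≤ #{b ∈ t | q b = c}) (B : γ → Prop) [DecidablePred B] :
    #{a ∈ s | B (p a)} ≤ #{b ∈ t | B (q b)} := by
  obtain ⟨e, he⟩ := exists_embedding_of_card_fiber_le h
  rw [← fintypeCard_subtype_eq_card_filter, ← fintypeCard_subtype_eq_card_filter]
  exact Fintype.card_le_of_embedding (e.subtypeMap fun a ha => (he a).symm ▸ ha)

end FiberwiseEmbedding

namespace GML

variable {P : Type}

noncomputable def type0 [Fintype P] [DecidableEq P] (Ψ : Finset P) : GML P :=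
  listAnd ((Finset.univ : Finset P).toList.map
    fun p => if p ∈ Ψ then GML.prop p else GML.neg (GML.prop p))

def typeSucc (σ : GML P) (L : List (GML P)) (count : GML P → ℕ) : GML P :=
  .and σ (.and (listAnd (L.map fun τ => diaEq (count τ) τ)) (boxF (listOr L)))

theorem md_listAnd_le {l : List (GML P)} {i : ℕ} (h : ∀ φ ∈ l, φ.md ≤ i) :
    (listAnd l).md ≤ i := by
  induction l with
  | nil => simp [listAnd, md]
  | cons ψ l ih => simpa [listAnd, md, h ψ] using ih fun φ hφ => h φ (by simp [hφ])

theorem md_listOr_le {l : List (GML P)} {i : ℕ} (h : ∀ φ ∈ l, φ.md ≤ i) :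
    (listOr l).md ≤ i := by
  induction l with
  | nil => simp [listOr, md]
  | cons ψ l ih => simpa [listOr, md, h ψ] using ih fun φ hφ => h φ (by simp [hφ])

variable [Fintype P] [DecidableEq P] {d : ℕ} {τ : GML P}

theorem mem_gType_zero : τ ∈ gType P 0 ↔ ∃ Ψ, τ = type0 Ψ := Iff.rfl

theorem mem_gType_succ :
    τ ∈ gType P (d + 1) ↔ ∃ Ψ L count, (∀ ρ ∈ L, ρ ∈ gType P d) ∧ L.Nodup ∧
      (∀ ρ ∈ L, 0 < count ρ) ∧ τ = typeSucc (type0 Ψ) L count := by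
  constructor
  · rintro ⟨_, ⟨Ψ, rfl⟩, L, hL, hnd, count, hpos, rfl⟩
    exact ⟨Ψ, L, count, hL, hnd, hpos, rfl⟩
  · rintro ⟨Ψ, L, count, hL, hnd, hpos, rfl⟩
    exact ⟨_, ⟨Ψ, rfl⟩, L, hL, hnd, count, hpos, rfl⟩

theorem md_type0 (Ψ : Finset P) : (type0 Ψ).md ≤ 0 :=
  md_listAnd_le <| by
    simp only [List.mem_map, forall_exists_index, and_imp, forall_apply_eq_imp_iff₂]
    intro p _
    split <;> simp [md]

theorem md_le_of_mem_gType (hτ : τ ∈ gType P d) : τ.md ≤ d := by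
  induction d generalizing τ with
  | zero =>
    obtain ⟨Ψ, rfl⟩ := mem_gType_zero.1 hτ
    exact md_type0 Ψ
  | succ d ih =>
    obtain ⟨Ψ, L, count, hL, -, -, rfl⟩ := mem_gType_succ.1 hτ
    have hmd : ∀ ρ ∈ L, ρ.md + 1 ≤ d + 1 := fun ρ hρ => Nat.succ_le_succ (ih (hL ρ hρ))
    simp only [typeSucc, md, sup_le_iff]
    refine ⟨(md_type0 Ψ).trans (Nat.zero_le _), md_listAnd_le ?_, ?_⟩
    · simpa [diaEq, md] using hmd
    · simpa [boxF, md] using md_listOr_le fun ρ hρ => ih (hL ρ hρ)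

end GML

open GML

namespace Kripke

open scoped Classical

variable {P V W : Type} {M : Kripke P V} {N : Kripke P W} {φ τ ρ : GML P} {a : V} {b : W}
  {i j d : ℕ}

def theory (M : Kripke P V) (i : ℕ) (a : V) : Set (GML P) := {φ | φ.md ≤ i ∧ M.Sat φ a}

theorem mem_theory : φ ∈ M.theory i a ↔ φ.md ≤ i ∧ M.Sat φ a := Iff.rfl

theorem sat_dia : M.Sat (.dia φ) a ↔ 0 < #{x ∈ M.succ a | M.Sat φ x} := by
  simp [Sat, card_pos, filter_nonempty_iff]

theorem sat_gdia {k : ℕ} : M.Sat (.gdia k φ) a ↔ k ≤ #{x ∈ M.succ a | M.Sat φ x} := by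
  rw [Sat, ← coe_filter, Set.ncard_coe_finset]

theorem sat_diaEq {k : ℕ} : M.Sat (diaEq k φ) a ↔ #{x ∈ M.succ a | M.Sat φ x} = k := by
  change M.Sat (.gdia k φ) a ∧ ¬ M.Sat (.gdia (k + 1) φ) a ↔ _
  rw [sat_gdia, sat_gdia]
  omega

theorem sat_boxF : M.Sat (boxF φ) a ↔ ∀ x ∈ M.succ a, M.Sat φ x := by
  simp [boxF, Sat]

theorem sat_listAnd {l : List (GML P)} : M.Sat (listAnd l) a ↔ ∀ φ ∈ l, M.Sat φ a := by
  induction l <;> simp [listAnd, Sat, *]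

theorem sat_listOr {l : List (GML P)} : M.Sat (listOr l) a ↔ ∃ φ ∈ l, M.Sat φ a := by
  induction l <;> simp [listOr, Sat, *]

theorem sat_typeSucc {σ : GML P} {L : List (GML P)} {count : GML P → ℕ} :
    M.Sat (typeSucc σ L count) a ↔ M.Sat σ a ∧
      (∀ ρ ∈ L, #{x ∈ M.succ a | M.Sat ρ x} = count ρ) ∧ ∀ x ∈ M.succ a, ∃ ρ ∈ L, M.Sat ρ x := by
  simp only [typeSucc, Sat, sat_listAnd, List.forall_mem_map, sat_diaEq, sat_boxF, sat_listOr]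

theorem sat_iff_of_theory_eq (H : M.theory i a = N.theory i b) (hφ : φ.md ≤ i) :
    M.Sat φ a ↔ N.Sat φ b :=
  and_congr_right_iff.1 (Set.ext_iff.1 H φ) hφ

theorem theory_eq_of_le (hij : i ≤ j) (H : M.theory j a = N.theory j b) :
    M.theory i a = N.theory i b :=
  Set.ext fun _ => and_congr_right fun hφ => sat_iff_of_theory_eq H (hφ.trans hij)

theorem theory_eq_iff : M.theory i a = N.theory i b ↔ (∀ p, M.label a p ↔ N.label b p) ∧
    ∀ φ : GML P, φ.md < i → #{x ∈ M.succ a | M.Sat φ x} = #{y ∈ N.succ b | N.Sat φ y} := by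
  constructor
  · intro H
    refine ⟨fun p => sat_iff_of_theory_eq H (φ := .prop p) (Nat.zero_le i), fun φ hφ => ?_⟩
    exact (sat_diaEq.1 <| (sat_iff_of_theory_eq H (φ := diaEq _ φ) (by simpa [diaEq, md])).1
      (sat_diaEq.2 rfl)).symm
  · rintro ⟨hlabel, hcount⟩
    refine Set.ext fun φ => and_congr_right fun hφ => ?_
    induction φ with
    | bot => exact Iff.rfl
    | prop p => exact hlabel p
    | neg φ ih => exact not_congr (ih hφ)
    | and φ ψ ihφ ihψ =>
      simp only [md, sup_le_iff] at hφ
      exact and_congr (ihφ hφ.1) (ihψ hφ.2)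
    | or φ ψ ihφ ihψ =>
      simp only [md, sup_le_iff] at hφ
      exact or_congr (ihφ hφ.1) (ihψ hφ.2)
    | dia φ => rw [sat_dia, sat_dia, hcount φ hφ]
    | gdia k φ => rw [sat_gdia, sat_gdia, hcount φ hφ]

theorem card_succ_sat_le_of_card_fiber_le
    (h : ∀ T, #{x ∈ M.succ a | M.theory d x = T} ≤ #{y ∈ N.succ b | N.theory d y = T})
    (hφ : φ.md ≤ d) : #{x ∈ M.succ a | M.Sat φ x} ≤ #{y ∈ N.succ b | N.Sat φ y} := by
  simpa only [mem_theory, hφ, true_and] using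
    card_filter_le_of_card_fiber_le h (φ ∈ ·)

variable [Fintype P] [DecidableEq P]

theorem sat_type0 {Ψ : Finset P} : M.Sat (type0 Ψ) a ↔ ∀ p, M.label a p ↔ p ∈ Ψ := by
  simp only [type0, sat_listAnd, List.forall_mem_map, mem_toList, mem_univ, true_implies]
  refine forall_congr' fun p => ?_
  split_ifs with hp <;> simp [Sat, hp]

theorem exists_mem_gType_sat (M : Kripke P V) (d : ℕ) (a : V) : ∃ τ ∈ gType P d, M.Sat τ a := by
  induction d generalizing a with
  | zero => exact ⟨type0 {p | M.label a p}, ⟨_, rfl⟩, sat_type0.2 fun p => by simp⟩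
  | succ d ih =>
    choose t ht hsat using ih
    refine ⟨typeSucc (type0 {p | M.label a p}) ((M.succ a).image t).toList
      (fun ρ => #{x ∈ M.succ a | M.Sat ρ x}), mem_gType_succ.2 ⟨_, _, _, ?_, nodup_toList _, ?_,
        rfl⟩, sat_typeSucc.2 ⟨sat_type0.2 fun p => by simp, fun _ _ => rfl, ?_⟩⟩
    · simp only [mem_toList, mem_image]
      rintro _ ⟨x, -, rfl⟩
      exact ht x
    · simp only [mem_toList, mem_image]
      rintro _ ⟨x, hx, rfl⟩
      exact card_pos.2 ⟨x, mem_filter.2 ⟨hx, hsat x⟩⟩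
    · exact fun x hx => ⟨t x, by simpa using ⟨x, hx, rfl⟩, hsat x⟩

theorem label_iff_of_sat_gType (hτ : τ ∈ gType P d) (ha : M.Sat τ a) (hb : N.Sat τ b) (p : P) :
    M.label a p ↔ N.label b p := by
  obtain ⟨Ψ, hΨa, hΨb⟩ : ∃ Ψ : Finset P, M.Sat (type0 Ψ) a ∧ N.Sat (type0 Ψ) b := by
    cases d with
    | zero =>
      obtain ⟨Ψ, rfl⟩ := mem_gType_zero.1 hτ
      exact ⟨Ψ, ha, hb⟩
    | succ d =>
      obtain ⟨Ψ, L, count, -, -, -, rfl⟩ := mem_gType_succ.1 hτ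
      exact ⟨Ψ, (sat_typeSucc.1 ha).1, (sat_typeSucc.1 hb).1⟩
  exact (sat_type0.1 hΨa p).trans (sat_type0.1 hΨb p).symm

variable (P) in
def TypeDeterminesTheory (d : ℕ) : Prop :=
  ∀ ⦃V W : Type⦄ (M : Kripke P V) (N : Kripke P W) ⦃a : V⦄ ⦃b : W⦄, ∀ τ ∈ gType P d,
    M.Sat τ a → N.Sat τ b → M.theory d a = N.theory d b

theorem sat_iff_theory_eq (hd : TypeDeterminesTheory P d) (hτ : τ ∈ gType P d)
    (ha : M.Sat τ a) : N.Sat τ b ↔ N.theory d b = M.theory d a :=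
  ⟨fun hb => hd N M τ hτ hb ha,
    fun H => (sat_iff_of_theory_eq H.symm (md_le_of_mem_gType hτ)).1 ha⟩

theorem card_fiber_le_of_card_sat_le (hd : TypeDeterminesTheory P d)
    (h : ∀ τ ∈ gType P d, #{x ∈ M.succ a | M.Sat τ x} ≤ #{y ∈ N.succ b | N.Sat τ y})
    (T : Set (GML P)) :
    #{x ∈ M.succ a | M.theory d x = T} ≤ #{y ∈ N.succ b | N.theory d y = T} := by
  obtain hT | ⟨x₀, hx₀⟩ := ({x ∈ M.succ a | M.theory d x = T} : Finset V).eq_empty_or_nonempty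
  · simp [hT]
  obtain rfl := (mem_filter.1 hx₀).2
  obtain ⟨τ, hτ, hx₀τ⟩ := exists_mem_gType_sat M d x₀
  simpa only [sat_iff_theory_eq hd hτ hx₀τ] using h τ hτ

theorem card_succ_sat_le_of_sat_gType_succ (hd : TypeDeterminesTheory P d)
    (hτ : τ ∈ gType P (d + 1)) (ha : M.Sat τ a) (hb : N.Sat τ b) (hρ : ρ ∈ gType P d) :
    #{x ∈ M.succ a | M.Sat ρ x} ≤ #{y ∈ N.succ b | N.Sat ρ y} := by
  obtain ⟨Ψ, L, count, hL, -, -, rfl⟩ := mem_gType_succ.1 hτ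
  obtain ⟨-, hacount, hacover⟩ := sat_typeSucc.1 ha
  obtain ⟨-, hbcount, -⟩ := sat_typeSucc.1 hb
  obtain hρa | ⟨x₀, hx₀⟩ := ({x ∈ M.succ a | M.Sat ρ x} : Finset V).eq_empty_or_nonempty
  · simp [hρa]
  obtain ⟨hx₀a, hx₀ρ⟩ := mem_filter.1 hx₀
  obtain ⟨ρ', hρ'L, hx₀ρ'⟩ := hacover x₀ hx₀a
  have hext : ∀ {X : Type} {K : Kripke P X} {y : X}, K.Sat ρ y ↔ K.Sat ρ' y :=
    (sat_iff_theory_eq hd hρ hx₀ρ).trans (sat_iff_theory_eq hd (hL ρ' hρ'L) hx₀ρ').symm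
  simp only [hext, hacount ρ' hρ'L, hbcount ρ' hρ'L, le_refl]

theorem typeDeterminesTheory_succ (hd : TypeDeterminesTheory P d) :
    TypeDeterminesTheory P (d + 1) := fun _ _ _ _ _ _ _ hτ ha hb =>
  theory_eq_iff.2 ⟨label_iff_of_sat_gType hτ ha hb, fun _ hφ =>
    le_antisymm
      (card_succ_sat_le_of_card_fiber_le (card_fiber_le_of_card_sat_le hd fun _ hρ =>
        card_succ_sat_le_of_sat_gType_succ hd hτ ha hb hρ) (Nat.lt_succ_iff.1 hφ))
      (card_succ_sat_le_of_card_fiber_le (card_fiber_le_of_card_sat_le hd fun _ hρ =>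
        card_succ_sat_le_of_sat_gType_succ hd hτ hb ha hρ) (Nat.lt_succ_iff.1 hφ))⟩

theorem typeDeterminesTheory : ∀ d, TypeDeterminesTheory P d
  | 0 => fun _ _ _ _ _ _ _ hτ ha hb =>
    theory_eq_iff.2 ⟨label_iff_of_sat_gType hτ ha hb, fun _ h => absurd h (Nat.not_lt_zero _)⟩
  | d + 1 => typeDeterminesTheory_succ (typeDeterminesTheory d)

theorem exists_injective_succ_of_theory_eq {m : ℕ} (H : M.theory (m + 1) a = N.theory (m + 1) b)
    {k : ℕ} (f : Fin k → V) (hf : Injective f) (hfa : ∀ j, f j ∈ M.succ a) :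
    ∃ g : Fin k → W, Injective g ∧ (∀ j, g j ∈ N.succ b) ∧
      ∀ j, M.theory m (f j) = N.theory m (g j) := by
  have hfiber := card_fiber_le_of_card_sat_le (typeDeterminesTheory m) fun τ hτ =>
    ((theory_eq_iff.1 H).2 τ (Nat.lt_succ_of_le (md_le_of_mem_gType hτ))).le
  obtain ⟨e, he⟩ := exists_embedding_of_card_fiber_le hfiber
  exact ⟨fun j => e ⟨f j, hfa j⟩, fun j j' h => hf (congrArg Subtype.val (e.injective
    (Subtype.ext h))), fun j => (e _).2, fun j => (he ⟨f j, hfa j⟩).symm⟩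

theorem isGradedBisim_theory (M : Kripke P V) (N : Kripke P W) (d : ℕ) :
    IsGradedBisim M N d fun i a b => M.theory i a = N.theory i b := by
  refine ⟨fun i j hij _ a b H => theory_eq_of_le hij H, fun i _ a b H => (theory_eq_iff.1 H).1, ?_⟩
  rintro (_ | m) hm - a b H
  · exact absurd hm (lt_irrefl 0)
  refine ⟨fun k f hf hfa => exists_injective_succ_of_theory_eq H f hf hfa, fun k g hg hgb => ?_⟩
  obtain ⟨f, hf, hfa, hfg⟩ := exists_injective_succ_of_theory_eq H.symm g hg hgb
  exact ⟨f, hf, hfa, fun j => (hfg j).symm⟩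

end Kripke

theorem type_implies_gradedBisim_general {P V W : Type} [Fintype P] [DecidableEq P]
    (M : Kripke P V) (N : Kripke P W) (w : V) (v : W) (d : ℕ)
    (τ : GML P) (hτ : τ ∈ gType P d) (hw : M.Sat τ w) (hv : N.Sat τ v) :
    GradedBisimilar M N w v d :=
  ⟨_, Kripke.isGradedBisim_theory M N d, Kripke.typeDeterminesTheory d M N τ hτ hw hv⟩

/-- if `(N,v)` satisfies the graded modal `d`-type realized by `(M,w)`,
then there is a graded `d`-bisimulation between `(M,w)` and `(N,v)`. -/
theorem type_implies_gradedBisim {P V W : Type} [Fintype P] [DecidableEq P]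
    [Fintype V] [Fintype W]
    (M : Kripke P V) (N : Kripke P W) (w : V) (v : W) (d : ℕ)
    (τ : GML P) (hτ : τ ∈ gType P d) (hw : M.Sat τ w) (hv : N.Sat τ v) :
    GradedBisimilar M N w v d :=
  type_implies_gradedBisim_general M N w v d τ hτ hw hv
end

section
/- If Player 2 has a winning strategy in the d-round Q-bisimulation game on pointed Kripke models (M,w) and (N,v), then (M,w) and (N,v) satisfy the same formulas of PL(Q) of modal depth at most d. Equivalently (contrapositively): if some formula of PL(Q) of modal depth at most d distinguishes (M,w) from (N,v), then Player 1 has a winning strategy in the d-round Q-bisimulation game. -/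
/-- Formulas of `PL(𝒬)`: propositional logic extended with generalized modalities
indexed by `ι`. -/
inductive PLQ (P ι : Type) : Type
  | bot : PLQ P ι
  | prop : P → PLQ P ι
  | neg : PLQ P ι → PLQ P ι
  | and : PLQ P ι → PLQ P ι → PLQ P ι
  | or : PLQ P ι → PLQ P ι → PLQ P ι
  | app : ι → PLQ P ι → PLQ P ι

/-- Modal depth of a `PL(𝒬)` formula. -/
def PLQ.md {P ι : Type} : PLQ P ι → ℕ
  | .bot => 0
  | .prop _ => 0
  | .neg φ => φ.md
  | .and φ ψ => max φ.md ψ.md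
  | .or φ ψ => max φ.md ψ.md
  | .app _ φ => φ.md + 1

/-- Satisfaction of `PL(𝒬)` formulas. A generalized quantifier is an
isomorphism-closed class of structures `(D, P)` with `P ⊆ D`, so it is determined by
the pair of cardinalities `(|D|, |P|)`; accordingly the family `𝒬` is given as
`Q : ι → ℕ → ℕ → Prop`, and `M,v ⊨ ⟨Q i⟩φ` iff
`(N(v), {u ∈ N(v) : M,u ⊨ φ}) ∈ Q i`, i.e. `Q i |N(v)| |{u ∈ N(v) : M,u ⊨ φ}|`. -/
def Kripke.SatQ {P V ι : Type} (M : Kripke P V) (Q : ι → ℕ → ℕ → Prop) :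
    PLQ P ι → V → Prop
  | .bot, _ => False
  | .prop p, v => M.label v p
  | .neg φ, v => ¬ M.SatQ Q φ v
  | .and φ ψ, v => M.SatQ Q φ v ∧ M.SatQ Q ψ v
  | .or φ ψ, v => M.SatQ Q φ v ∨ M.SatQ Q ψ v
  | .app i φ, v => Q i (M.succ v).card {u | u ∈ M.succ v ∧ M.SatQ Q φ u}.ncard

/-- Disjoint union `M ⊔ N` of two Kripke models. -/
def Kripke.sum {P V W : Type} (M : Kripke P V) (N : Kripke P W) : Kripke P (V ⊕ W) where
  succ := fun x => match x with
    | .inl a => (M.succ a).map ⟨Sum.inl, Sum.inl_injective⟩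
    | .inr b => (N.succ b).map ⟨Sum.inr, Sum.inr_injective⟩
  label := fun x p => match x with
    | .inl a => M.label a p
    | .inr b => N.label b p

/-- `AttWin K Q d a b` : the player currently in the attacker role has a winning
strategy in the `d`-round `𝒬`-bisimulation game from position `(a, b)` (both pebbles on
nodes of the single model `K`, e.g. a disjoint union). The attacker wins immediately if
the pebbled nodes disagree on a proposition symbol; otherwise the attacker selects a
pebble `u` (the other being `v`), a modality `⟨Q i⟩`, a set `X ⊆ N(u)` with
`(N(u),X) ∈ Q i`, and a set `P' ⊆ N(v)`; the defender may contest `X` or `P'`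
(moving the pebbles as prescribed), or reply with `X' ⊆ N(v)` with `(N(v),X') ∈ Q i`
and `P' ⊆ X'`, after which the attacker may contest `X'` (becoming the defender), move
to `N(v) \ X'` × `X` (becoming the defender), or move one pebble into `X'` with the
defender answering in `X ∪ P'`. (By determinacy of this finite game, the defender,
i.e. Player 2, has a winning strategy iff `AttWin` fails.) -/
def AttWin {P V ι : Type} [DecidableEq V] (K : Kripke P V) (Q : ι → ℕ → ℕ → Prop) :
    ℕ → V → V → Prop
  | 0, a, b => ¬ ∀ p, K.label a p ↔ K.label b p
  | (d+1), a, b => (¬ ∀ p, K.label a p ↔ K.label b p) ∨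
      ∃ u v : V, ((u, v) = (a, b) ∨ (u, v) = (b, a)) ∧
      ∃ (i : ι) (X P' : Finset V), X ⊆ K.succ u ∧ Q i (K.succ u).card X.card ∧
        P' ⊆ K.succ v ∧
        (∀ x ∈ X, ∀ y ∈ K.succ u \ X, AttWin K Q d x y) ∧
        (∀ y ∈ P', ∀ x ∈ K.succ u, AttWin K Q d x y) ∧
        (∀ X' : Finset V, X' ⊆ K.succ v → Q i (K.succ v).card X'.card → P' ⊆ X' →
          (∃ y ∈ X', ∃ z ∈ K.succ v \ X', ¬ AttWin K Q d y z) ∨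
          (∃ y ∈ K.succ v \ X', ∃ x ∈ X, ¬ AttWin K Q d x y) ∨
          (∃ y ∈ X', ∀ x, (x ∈ X ∨ x ∈ P') → AttWin K Q d x y))

/-- `Player 2 (the defender) has a winning strategy in the `d`-round `𝒬`-bisimulation
game from position `(a,b)` (via determinacy of the finite game). -/
def DefWin {P V ι : Type} [DecidableEq V] (K : Kripke P V) (Q : ι → ℕ → ℕ → Prop)
    (d : ℕ) (a b : V) : Prop := ¬ AttWin K Q d a b

/-- `CharSat K Q d w v` : `v` satisfies the canonical `𝒬`-characteristic depth-`d`
formula `φ^{𝒬,d}_{K,w}` of `w`. At depth 0 this is the full propositional agreement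
with `w`; at depth `d+1` it additionally requires, for every modality `⟨Q i⟩` and every
set `C` of depth-`d` characteristic formulas of nodes of `K` (encoded by the set `S` of
nodes whose characteristic formulas constitute `C`, so that a node `u` satisfies `⋁C`
iff `∃ x ∈ S, CharSat K Q d x u`), that `⟨Q i⟩(⋁C)` holds at `v` iff it holds at `w`. -/
def CharSat {P V ι : Type} (K : Kripke P V) (Q : ι → ℕ → ℕ → Prop) :
    ℕ → V → V → Prop
  | 0, w, v => ∀ p, K.label w p ↔ K.label v p
  | (d+1), w, v => (∀ p, K.label w p ↔ K.label v p) ∧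
      ∀ (i : ι) (S : Set V),
        (Q i (K.succ w).card
            {u | u ∈ K.succ w ∧ ∃ x ∈ S, CharSat K Q d x u}.ncard ↔
         Q i (K.succ v).card
            {u | u ∈ K.succ v ∧ ∃ x ∈ S, CharSat K Q d x u}.ncard)

/-!
`CharSat K Q d` is an equivalence relation, and formulas of depth `≤ d` are invariant under it:
the argument of an outermost modality has an extension that is a union of classes one level
down. By induction on `d`, `CharSat K Q d` is exactly the complement of `AttWin K Q d`. Once the
attacker wins the remaining rounds precisely from the pairs unrelated by an equivalence `R`, a
winning attack from `(u, v)` amounts to a modality `⟨Q i⟩` and a union `T` of `R`-classes with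
`⟨Q i⟩T` true at `u` and false at `v`. Given `T`, the attacker plays `X = N(u) ∩ T` and, as `P'`,
the nodes of `N(v) ∩ T` unrelated to all of `N(u)`; against an attack `(X, P')` the defender
answers with the nodes of `N(v)` related to something in `X ∪ P'`.
-/

section Kripke
variable {P V W ι : Type} {Q : ι → ℕ → ℕ → Prop}

theorem Kripke.ncard_succ_filter (K : Kripke P V) (u : V) (T : V → Prop) [DecidablePred T] :
    {y | y ∈ K.succ u ∧ T y}.ncard = ((K.succ u).filter T).card := by
  rw [← Finset.coe_filter, Set.ncard_coe_finset]

theorem Kripke.satQ_embedding_iff (M : Kripke P V) (N : Kripke P W) (f : V ↪ W)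
    (hsucc : ∀ a, N.succ (f a) = (M.succ a).map f)
    (hlabel : ∀ a p, N.label (f a) p ↔ M.label a p) (φ : PLQ P ι) (a : V) :
    N.SatQ Q φ (f a) ↔ M.SatQ Q φ a := by
  induction φ generalizing a with
  | bot => exact Iff.rfl
  | prop p => exact hlabel a p
  | neg φ ih => exact not_congr (ih a)
  | and φ ψ ihφ ihψ => exact and_congr (ihφ a) (ihψ a)
  | or φ ψ ihφ ihψ => exact or_congr (ihφ a) (ihψ a)
  | app i ψ ih =>
    have hext : {u | u ∈ N.succ (f a) ∧ N.SatQ Q ψ u} =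
        f '' {u | u ∈ M.succ a ∧ M.SatQ Q ψ u} := by
      ext x
      simp only [hsucc, Finset.mem_map, Set.mem_ofPred_eq, Set.mem_image]
      constructor
      · rintro ⟨⟨y, hy, rfl⟩, hψ⟩
        exact ⟨y, ⟨hy, (ih y).mp hψ⟩, rfl⟩
      · rintro ⟨y, ⟨hy, hψ⟩, rfl⟩
        exact ⟨⟨y, hy, rfl⟩, (ih y).mpr hψ⟩
    show Q i _ _ ↔ Q i _ _
    rw [hext, Set.ncard_image_of_injective _ f.injective, hsucc, Finset.card_map]

theorem Kripke.satQ_sum_inl (M : Kripke P V) (N : Kripke P W) (φ : PLQ P ι) (a : V) :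
    (M.sum N).SatQ Q φ (Sum.inl a) ↔ M.SatQ Q φ a :=
  M.satQ_embedding_iff (M.sum N) .inl (fun _ => rfl) (fun _ _ => Iff.rfl) φ a

theorem Kripke.satQ_sum_inr (M : Kripke P V) (N : Kripke P W) (φ : PLQ P ι) (b : W) :
    (M.sum N).SatQ Q φ (Sum.inr b) ↔ N.SatQ Q φ b :=
  N.satQ_embedding_iff (M.sum N) .inr (fun _ => rfl) (fun _ _ => Iff.rfl) φ b

end Kripke

section CharSat
variable {P V ι : Type} {K : Kripke P V} {Q : ι → ℕ → ℕ → Prop}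

theorem CharSat.label_iff {d : ℕ} {w v : V} (h : CharSat K Q d w v) (p : P) :
    K.label w p ↔ K.label v p := by
  cases d with
  | zero => exact h p
  | succ d => exact h.1 p

theorem charSat_equivalence (d : ℕ) : Equivalence (CharSat K Q d) := by
  cases d with
  | zero => exact ⟨fun _ _ => Iff.rfl, fun h p => (h p).symm, fun h h' p => (h p).trans (h' p)⟩
  | succ d =>
    exact ⟨fun _ => ⟨fun _ => Iff.rfl, fun _ _ => Iff.rfl⟩,
      fun h => ⟨fun p => (h.1 p).symm, fun i S => (h.2 i S).symm⟩,
      fun h h' => ⟨fun p => (h.1 p).trans (h'.1 p), fun i S => (h.2 i S).trans (h'.2 i S)⟩⟩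

theorem satQ_iff_of_charSat (φ : PLQ P ι) {d : ℕ} (hd : φ.md ≤ d) {w v : V}
    (h : CharSat K Q d w v) : K.SatQ Q φ w ↔ K.SatQ Q φ v := by
  induction φ generalizing d w v with
  | bot => exact Iff.rfl
  | prop p => exact h.label_iff p
  | neg φ ih => exact not_congr (ih hd h)
  | and φ ψ ihφ ihψ =>
    exact and_congr (ihφ (le_of_max_le_left hd) h) (ihψ (le_of_max_le_right hd) h)
  | or φ ψ ihφ ihψ =>
    exact or_congr (ihφ (le_of_max_le_left hd) h) (ihψ (le_of_max_le_right hd) h)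
  | app i ψ ih =>
    cases d with
    | zero => exact absurd hd (Nat.not_succ_le_zero _)
    | succ e =>
      have hext : ∀ x, {u | u ∈ K.succ x ∧ ∃ s ∈ {y | K.SatQ Q ψ y}, CharSat K Q e s u} =
          {u | u ∈ K.succ x ∧ K.SatQ Q ψ u} := fun x =>
        Set.ext fun u => and_congr_right fun _ =>
          ⟨fun ⟨s, hs, hsu⟩ => (ih (Nat.le_of_succ_le_succ hd) hsu).mp hs,
            fun hu => ⟨u, hu, (charSat_equivalence e).refl u⟩⟩
      have h' := h.2 i {y | K.SatQ Q ψ y}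
      rwa [hext, hext] at h'

end CharSat

section Game
variable {P V ι : Type}

/-- Some modality `⟨Q i⟩` applied to a union of `R`-classes holds at `u` but not at `v`. -/
def QSeparates (K : Kripke P V) (Q : ι → ℕ → ℕ → Prop) (R : V → V → Prop) (u v : V) : Prop :=
  ∃ (i : ι) (S : Set V), Q i (K.succ u).card {y | y ∈ K.succ u ∧ ∃ x ∈ S, R x y}.ncard ∧
    ¬ Q i (K.succ v).card {y | y ∈ K.succ v ∧ ∃ x ∈ S, R x y}.ncard

theorem charSat_succ_iff {K : Kripke P V} {Q : ι → ℕ → ℕ → Prop} {d : ℕ} {a b : V} :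
    CharSat K Q (d + 1) a b ↔ (∀ p, K.label a p ↔ K.label b p) ∧
      ¬ QSeparates K Q (CharSat K Q d) a b ∧ ¬ QSeparates K Q (CharSat K Q d) b a := by
  simp only [CharSat, QSeparates, not_exists, not_and_not_right, ← forall_and,
    iff_iff_implies_and_implies]

variable [DecidableEq V] (K : Kripke P V) (Q : ι → ℕ → ℕ → Prop)

/-- One round of the game from `(u, v)` with the attacker selecting the pebble on `u`;
`A x y` says that the attacker wins the remaining rounds from `(x, y)`. -/
def AttackerMove (A : V → V → Prop) (u v : V) : Prop :=
  ∃ (i : ι) (X P' : Finset V), X ⊆ K.succ u ∧ Q i (K.succ u).card X.card ∧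
    P' ⊆ K.succ v ∧
    (∀ x ∈ X, ∀ y ∈ K.succ u \ X, A x y) ∧
    (∀ y ∈ P', ∀ x ∈ K.succ u, A x y) ∧
    (∀ X' : Finset V, X' ⊆ K.succ v → Q i (K.succ v).card X'.card → P' ⊆ X' →
      (∃ y ∈ X', ∃ z ∈ K.succ v \ X', ¬ A y z) ∨
      (∃ y ∈ K.succ v \ X', ∃ x ∈ X, ¬ A x y) ∨
      (∃ y ∈ X', ∀ x, (x ∈ X ∨ x ∈ P') → A x y))

theorem attWin_succ_iff {d : ℕ} {a b : V} :
    AttWin K Q (d + 1) a b ↔ (¬ ∀ p, K.label a p ↔ K.label b p) ∨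
      AttackerMove K Q (AttWin K Q d) a b ∨ AttackerMove K Q (AttWin K Q d) b a := by
  simp only [AttWin, AttackerMove, Prod.mk.injEq, or_and_right, exists_or, and_assoc,
    exists_and_left, exists_eq_left]

variable {K Q} {R : V → V → Prop}

theorem QSeparates.of_attackerMove (hR : Equivalence R) {u v : V}
    (h : AttackerMove K Q (fun x y => ¬ R x y) u v) : QSeparates K Q R u v := by
  classical
  obtain ⟨i, X, P', hXu, hQX, hP'v, hX, hP', hreply⟩ := h
  let S : Set V := {x | x ∈ X ∨ x ∈ P'}
  refine ⟨i, S, ?_, fun hQ => ?_⟩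
  · convert hQX using 2
    rw [K.ncard_succ_filter]
    congr 1
    ext y
    simp only [Finset.mem_filter]
    constructor
    · rintro ⟨hy, x, hx | hx, hxy⟩
      · by_contra hyX
        exact hX x hx y (Finset.mem_sdiff.2 ⟨hy, hyX⟩) hxy
      · exact (hP' x hx y hy (hR.symm hxy)).elim
    · exact fun hy => ⟨hXu hy, y, Or.inl hy, hR.refl y⟩
  · rw [K.ncard_succ_filter] at hQ
    rcases hreply _ (Finset.filter_subset _ _) hQ
        (fun y hy => Finset.mem_filter.2 ⟨hP'v hy, y, Or.inr hy, hR.refl y⟩) with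
      ⟨y, hy, z, hz, hyz⟩ | ⟨y, hy, x, hx, hxy⟩ | ⟨y, hy, hfresh⟩
    · obtain ⟨x, hx, hxy⟩ := (Finset.mem_filter.1 hy).2
      exact (Finset.mem_sdiff.1 hz).2 (Finset.mem_filter.2
        ⟨(Finset.mem_sdiff.1 hz).1, x, hx, hR.trans hxy (not_not.1 hyz)⟩)
    · exact (Finset.mem_sdiff.1 hy).2 (Finset.mem_filter.2
        ⟨(Finset.mem_sdiff.1 hy).1, x, Or.inl hx, not_not.1 hxy⟩)
    · obtain ⟨x, hx, hxy⟩ := (Finset.mem_filter.1 hy).2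
      exact hfresh x hx hxy

theorem QSeparates.attackerMove (hR : Equivalence R) {u v : V} (h : QSeparates K Q R u v) :
    AttackerMove K Q (fun x y => ¬ R x y) u v := by
  classical
  obtain ⟨i, S, hQu, hQv⟩ := h
  let T : V → Prop := fun y => ∃ x ∈ S, R x y
  have hT : ∀ {x y}, T x → R x y → T y := fun ⟨s, hs, hsx⟩ hxy => ⟨s, hs, hR.trans hsx hxy⟩
  let X := (K.succ u).filter T
  let B := (K.succ v).filter T
  let P' := B.filter (fun y => ∀ x ∈ K.succ u, ¬ R x y)
  rw [K.ncard_succ_filter] at hQu hQv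
  refine ⟨i, X, P', Finset.filter_subset _ _, hQu,
    (Finset.filter_subset _ _).trans (Finset.filter_subset _ _), ?_, ?_, ?_⟩
  · intro x hx y hy hxy
    exact (Finset.mem_sdiff.1 hy).2
      (Finset.mem_filter.2 ⟨(Finset.mem_sdiff.1 hy).1, hT (Finset.mem_filter.1 hx).2 hxy⟩)
  · exact fun y hy => (Finset.mem_filter.1 hy).2
  · intro X' hX'v hQX' hP'X'
    by_cases hfresh : ∃ y ∈ X', ∀ x, (x ∈ X ∨ x ∈ P') → ¬ R x y
    · exact Or.inr (Or.inr hfresh)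
    push Not at hfresh
    -- Otherwise `X' ⊆ B`, and `Q` tells `X'` apart from `B`, so some `z ∈ B` lies outside `X'`.
    have hX'B : X' ⊆ B := fun y hy => by
      obtain ⟨x, hx | hx, hxy⟩ := hfresh y hy
      · exact Finset.mem_filter.2 ⟨hX'v hy, hT (Finset.mem_filter.1 hx).2 hxy⟩
      · exact Finset.mem_filter.2
          ⟨hX'v hy, hT (Finset.mem_filter.1 (Finset.mem_filter.1 hx).1).2 hxy⟩
    obtain ⟨z, hzB, hzX'⟩ := Finset.not_subset.1 fun hBX' =>
      hQv (show Q i (K.succ v).card B.card from hX'B.antisymm hBX' ▸ hQX')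
    obtain ⟨x, hxu, hxz⟩ : ∃ x ∈ K.succ u, R x z := by
      by_contra! hnone
      exact hzX' (hP'X' (Finset.mem_filter.2 ⟨hzB, hnone⟩))
    refine Or.inr (Or.inl ⟨z, Finset.mem_sdiff.2 ⟨(Finset.mem_filter.1 hzB).1, hzX'⟩, x,
      Finset.mem_filter.2 ⟨hxu, hT (Finset.mem_filter.1 hzB).2 (hR.symm hxz)⟩, not_not.2 hxz⟩)

theorem attackerMove_not_iff (hR : Equivalence R) {u v : V} :
    AttackerMove K Q (fun x y => ¬ R x y) u v ↔ QSeparates K Q R u v :=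
  ⟨QSeparates.of_attackerMove hR, QSeparates.attackerMove hR⟩

theorem charSat_iff_not_attWin (d : ℕ) (a b : V) :
    CharSat K Q d a b ↔ ¬ AttWin K Q d a b := by
  induction d generalizing a b with
  | zero => exact not_not.symm
  | succ d ih =>
    have hAttWin : AttWin K Q d = fun x y => ¬ CharSat K Q d x y :=
      funext₂ fun x y => propext (iff_not_comm.1 (ih x y))
    rw [charSat_succ_iff, attWin_succ_iff, hAttWin, attackerMove_not_iff (charSat_equivalence d),
      attackerMove_not_iff (charSat_equivalence d), not_or, not_or, not_not]

end Game

theorem distinguishing_formula_implies_attacker_win_general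
    {P V W ι : Type} [DecidableEq V] [DecidableEq W]
    (M : Kripke P V) (N : Kripke P W) (Q : ι → ℕ → ℕ → Prop) (w : V) (v : W) (d : ℕ)
    (h : ∃ φ : PLQ P ι, φ.md ≤ d ∧ ¬ (M.SatQ Q φ w ↔ N.SatQ Q φ v)) :
    AttWin (M.sum N) Q d (Sum.inl w) (Sum.inr v) := by
  obtain ⟨φ, hmd, hφ⟩ := h
  by_contra hdef
  rw [← charSat_iff_not_attWin] at hdef
  rw [← M.satQ_sum_inl N, ← M.satQ_sum_inr N] at hφ
  exact hφ (satQ_iff_of_charSat φ hmd hdef)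

/-- if some `PL(𝒬)` formula of modal depth at most `d` distinguishes
`(M,w)` from `(N,v)`, then Player 1 (the attacker) has a winning strategy in the
`d`-round `𝒬`-bisimulation game; equivalently, a winning strategy for Player 2 implies
that `(M,w)` and `(N,v)` satisfy the same `PL(𝒬)` formulas of depth at most `d`. -/
theorem distinguishing_formula_implies_attacker_win
    {P V W ι : Type} [Fintype V] [Fintype W] [DecidableEq V] [DecidableEq W]
    (M : Kripke P V) (N : Kripke P W) (Q : ι → ℕ → ℕ → Prop) (w : V) (v : W) (d : ℕ)
    (h : ∃ φ : PLQ P ι, φ.md ≤ d ∧ ¬ (M.SatQ Q φ w ↔ N.SatQ Q φ v)) :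
    AttWin (M.sum N) Q d (Sum.inl w) (Sum.inr v) :=
  distinguishing_formula_implies_attacker_win_general M N Q w v d h
end

section
/- For pointed Kripke models (M,w) and (N,v) and a set Q of generalized modalities: if (M,w) and (N,v) satisfy the same PL(Q)-formulas of modal depth at most d, then N,v satisfies the canonical Q-characteristic formula φ^{Q,d}_{M⊔N,w} of w computed in the disjoint union M⊔N. -/
/-!
The depth-`d` characteristic condition `CharSat K Q d x` is itself expressed by a `PL(𝒬)`
formula of depth `d` whenever `K` is finite. The only subtle point is that it is an
infinite conjunction (over all proposition symbols, resp. all modalities and all sets `S`)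
of definable conditions. But in a finite model, agreeing with `x` on an arbitrary family of
definable predicates is again definable: for each of the finitely many nodes `y` that
disagree with `x`, keep just one predicate witnessing the disagreement. Since `x` satisfies
its own characteristic condition, every node satisfying the same depth-`d` formulas as `x`
satisfies it too. Finally, the truth of formulas at `w` and `v` is the same in `M ⊔ N` as in
`M`, resp. `N`.
-/

namespace Kripke

variable {P U V ι : Type} (K : Kripke P U) (Q : ι → ℕ → ℕ → Prop)

def Definable (e : ℕ) (p : U → Prop) : Prop :=
  ∃ φ : PLQ P ι, φ.md ≤ e ∧ K.SatQ Q φ = p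

variable {K Q} {e : ℕ} {p q : U → Prop}

theorem definable_label (a : P) : K.Definable Q 0 fun u => K.label u a :=
  ⟨.prop a, le_rfl, rfl⟩

theorem definable_true : K.Definable Q e fun _ => True :=
  ⟨.neg .bot, Nat.zero_le _, funext fun _ => propext not_false_iff⟩

theorem definable_false : K.Definable Q e fun _ => False :=
  ⟨.bot, Nat.zero_le _, rfl⟩

namespace Definable

theorem mono {e' : ℕ} (hp : K.Definable Q e p) (he : e ≤ e') : K.Definable Q e' p :=
  let ⟨φ, hmd, hφ⟩ := hp
  ⟨φ, hmd.trans he, hφ⟩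

theorem not (hp : K.Definable Q e p) : K.Definable Q e fun u => ¬ p u := by
  obtain ⟨φ, hmd, rfl⟩ := hp
  exact ⟨.neg φ, hmd, rfl⟩

theorem and (hp : K.Definable Q e p) (hq : K.Definable Q e q) :
    K.Definable Q e fun u => p u ∧ q u := by
  obtain ⟨φ, hφ, rfl⟩ := hp
  obtain ⟨ψ, hψ, rfl⟩ := hq
  exact ⟨.and φ ψ, max_le hφ hψ, rfl⟩

theorem or (hp : K.Definable Q e p) (hq : K.Definable Q e q) :
    K.Definable Q e fun u => p u ∨ q u := by
  obtain ⟨φ, hφ, rfl⟩ := hp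
  obtain ⟨ψ, hψ, rfl⟩ := hq
  exact ⟨.or φ ψ, max_le hφ hψ, rfl⟩

theorem iff_const (hp : K.Definable Q e p) (c : Prop) : K.Definable Q e fun u => p u ↔ c := by
  by_cases hc : c
  · simpa [hc] using hp
  · simpa [hc] using hp.not

theorem modal (hp : K.Definable Q e p) (i : ι) :
    K.Definable Q (e + 1) fun u => Q i (K.succ u).card {z | z ∈ K.succ u ∧ p z}.ncard := by
  obtain ⟨φ, hφ, rfl⟩ := hp
  exact ⟨.app i φ, Nat.succ_le_succ hφ, rfl⟩

theorem finset_forall {α : Type} {F : α → U → Prop} (s : Finset α)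
    (hF : ∀ a ∈ s, K.Definable Q e (F a)) : K.Definable Q e fun u => ∀ a ∈ s, F a u := by
  classical
  induction s using Finset.induction_on with
  | empty => simpa using definable_true
  | insert a s _ ih =>
    simpa only [Finset.mem_insert, forall_eq_or_imp] using
      (hF a (s.mem_insert_self a)).and (ih fun b hb => hF b (Finset.mem_insert_of_mem hb))

theorem finset_exists {α : Type} {F : α → U → Prop} (s : Finset α)
    (hF : ∀ a ∈ s, K.Definable Q e (F a)) : K.Definable Q e fun u => ∃ a ∈ s, F a u := by
  classical
  induction s using Finset.induction_on with
  | empty => simpa using definable_false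
  | insert a s _ ih =>
    simpa only [Finset.mem_insert, exists_eq_or_imp] using
      (hF a (s.mem_insert_self a)).or (ih fun b hb => hF b (Finset.mem_insert_of_mem hb))

theorem finite_forall {α : Type} [Finite α] {F : α → U → Prop} (hF : ∀ a, K.Definable Q e (F a)) :
    K.Definable Q e fun u => ∀ a, F a u := by
  cases nonempty_fintype α
  simpa using finset_forall Finset.univ fun a _ => hF a

theorem exists_mem {α : Type} {F : α → U → Prop} {s : Set α} (hs : s.Finite)
    (hF : ∀ a ∈ s, K.Definable Q e (F a)) : K.Definable Q e fun u => ∃ a ∈ s, F a u := by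
  simpa using finset_exists hs.toFinset fun a ha => hF a (hs.mem_toFinset.mp ha)

theorem agree [Finite U] {κ : Type} {F : κ → U → Prop} (hF : ∀ k, K.Definable Q e (F k))
    (x : U) : K.Definable Q e fun u => ∀ k, F k x ↔ F k u := by
  have witness : ∀ y : U, ∃ G : U → Prop, K.Definable Q e G ∧
      (∀ u, (∀ k, F k x ↔ F k u) → G u) ∧ (G y → ∀ k, F k x ↔ F k y) := by
    intro y
    by_cases hy : ∀ k, F k x ↔ F k y
    · exact ⟨fun _ => True, definable_true, fun _ _ => trivial, fun _ => hy⟩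
    · obtain ⟨k, hk⟩ := not_forall.mp hy
      exact ⟨fun u => F k u ↔ F k x, (hF k).iff_const _, fun u hu => (hu k).symm,
        fun hG => absurd hG.symm hk⟩
  choose G hGdef hGx hGy using witness
  have hagree : (fun u => ∀ k, F k x ↔ F k u) = fun u => ∀ y, G y u :=
    funext fun u => propext ⟨fun hu y => hGx y u hu, fun hG => hGy u (hG u)⟩
  rw [hagree]
  exact Definable.finite_forall hGdef

end Definable

theorem definable_labels_agree [Finite U] (x : U) :
    K.Definable Q 0 fun u => ∀ a, K.label x a ↔ K.label u a :=
  Definable.agree definable_label x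

theorem definable_charSat [Finite U] (d : ℕ) (x : U) : K.Definable Q d (CharSat K Q d x) := by
  induction d generalizing x with
  | zero => exact definable_labels_agree x
  | succ e ih =>
    have hmodal : K.Definable Q (e + 1) fun u => ∀ iS : ι × Set U,
        Q iS.1 (K.succ x).card {z | z ∈ K.succ x ∧ ∃ y ∈ iS.2, CharSat K Q e y z}.ncard ↔
        Q iS.1 (K.succ u).card {z | z ∈ K.succ u ∧ ∃ y ∈ iS.2, CharSat K Q e y z}.ncard :=
      Definable.agree (fun iS : ι × Set U =>
        (Definable.exists_mem iS.2.toFinite fun y _ => ih y).modal iS.1) x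
    convert ((definable_labels_agree x).mono (Nat.zero_le _)).and hmodal using 1
    funext u
    simp only [CharSat, Prod.forall]

theorem charSat_self (d : ℕ) (x : U) : CharSat K Q d x x := by
  cases d <;> simp [CharSat]

theorem charSat_of_forall_satQ_iff [Finite U] {d : ℕ} {x y : U}
    (h : ∀ φ : PLQ P ι, φ.md ≤ d → (K.SatQ Q φ x ↔ K.SatQ Q φ y)) : CharSat K Q d x y := by
  obtain ⟨φ, hmd, hφ⟩ := definable_charSat (K := K) (Q := Q) d x
  have hx := charSat_self (K := K) (Q := Q) d x
  rw [← hφ] at hx ⊢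
  exact (h φ hmd).mp hx

theorem satQ_embedding_iff_s12 (M : Kripke P V) (f : V ↪ U)
    (hsucc : ∀ a, K.succ (f a) = (M.succ a).map f) (hlabel : ∀ a b, K.label (f a) b ↔ M.label a b)
    (φ : PLQ P ι) (a : V) : K.SatQ Q φ (f a) ↔ M.SatQ Q φ a := by
  induction φ generalizing a with
  | bot => exact Iff.rfl
  | prop b => exact hlabel a b
  | neg φ ih => exact not_congr (ih a)
  | and φ ψ ih₁ ih₂ => exact and_congr (ih₁ a) (ih₂ a)
  | or φ ψ ih₁ ih₂ => exact or_congr (ih₁ a) (ih₂ a)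
  | app i φ ih =>
    have himage : {u | u ∈ (M.succ a).map f ∧ K.SatQ Q φ u} =
        f '' {b | b ∈ M.succ a ∧ M.SatQ Q φ b} := by
      ext u
      simp only [Finset.mem_map, Set.mem_ofPred_eq, Set.mem_image]
      constructor
      · rintro ⟨⟨b, hb, rfl⟩, hφ⟩
        exact ⟨b, ⟨hb, (ih b).mp hφ⟩, rfl⟩
      · rintro ⟨b, ⟨hb, hφ⟩, rfl⟩
        exact ⟨⟨b, hb, rfl⟩, (ih b).mpr hφ⟩
    simp only [SatQ, hsucc, Finset.card_map, himage, Set.ncard_image_of_injective _ f.injective]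

theorem sum_satQ_inl {W : Type} (M : Kripke P V) (N : Kripke P W) (φ : PLQ P ι) (a : V) :
    (M.sum N).SatQ Q φ (.inl a) ↔ M.SatQ Q φ a :=
  satQ_embedding_iff_s12 M .inl (fun _ => rfl) (fun _ _ => Iff.rfl) φ a

theorem sum_satQ_inr {W : Type} (M : Kripke P V) (N : Kripke P W) (φ : PLQ P ι) (b : W) :
    (M.sum N).SatQ Q φ (.inr b) ↔ N.SatQ Q φ b :=
  satQ_embedding_iff_s12 N .inr (fun _ => rfl) (fun _ _ => Iff.rfl) φ b

end Kripke

theorem plq_equiv_implies_charSat_general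
    {P V W ι : Type} [Fintype V] [Fintype W]
    (M : Kripke P V) (N : Kripke P W) (Q : ι → ℕ → ℕ → Prop) (w : V) (v : W) (d : ℕ)
    (h : ∀ φ : PLQ P ι, φ.md ≤ d → (M.SatQ Q φ w ↔ N.SatQ Q φ v)) :
    CharSat (M.sum N) Q d (Sum.inl w) (Sum.inr v) :=
  Kripke.charSat_of_forall_satQ_iff fun φ hφ => by
    rw [Kripke.sum_satQ_inl, Kripke.sum_satQ_inr]
    exact h φ hφ

/-- if `(M,w)` and `(N,v)` satisfy the same `PL(𝒬)` formulas of modal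
depth at most `d`, then `N,v` satisfies the canonical `𝒬`-characteristic depth-`d`
formula `φ^{𝒬,d}_{M⊔N,w}` of `w` computed in the disjoint union `M ⊔ N`. -/
theorem plq_equiv_implies_charSat
    {P V W ι : Type} [Fintype V] [Fintype W] [DecidableEq V] [DecidableEq W]
    (M : Kripke P V) (N : Kripke P W) (Q : ι → ℕ → ℕ → Prop) (w : V) (v : W) (d : ℕ)
    (h : ∀ φ : PLQ P ι, φ.md ≤ d → (M.SatQ Q φ w ↔ N.SatQ Q φ v)) :
    CharSat (M.sum N) Q d (Sum.inl w) (Sum.inr v) :=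
  plq_equiv_implies_charSat_general M N Q w v d h
end

section
/- For every pair of pointed Kripke models (M,w), (N,v), every set Q of generalized modalities, and every d ∈ ℕ, the following are equivalent: (1) Player 2 has a winning strategy in the d-round Q-bisimulation game on (M,w) and (N,v); (2) (M,w) and (N,v) satisfy the same PL(Q)-formulas of modal depth at most d; (3) N,v satisfies the canonical Q-characteristic depth-d formula of w computed in the disjoint union M⊔N. -/
/-!
All three conditions are equivalent to depth-`d` modal equivalence of `inl w` and `inr v`
inside `M ⊔ N`. On a finite set of nodes every union of depth-`d` equivalence classes is
defined by a depth-`d` formula (a disjunction of conjunctions of separating formulas), and the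
successor sets are finite. Hence depth-`(d+1)` equivalence means agreeing on labels and on
`⟨Q i⟩` of every saturated set of successors, which is exactly the recursion of `CharSat`, and
also exactly what the attacker cannot refute in one round when the remaining rounds are won
precisely at inequivalent pairs.
-/

namespace PLQ

variable {P ι : Type}

def conj (l : List (PLQ P ι)) : PLQ P ι := l.foldr .and (.neg .bot)

def disj (l : List (PLQ P ι)) : PLQ P ι := l.foldr .or .bot

lemma md_conj_le {d : ℕ} {l : List (PLQ P ι)} (h : ∀ φ ∈ l, φ.md ≤ d) : (conj l).md ≤ d := by
  induction l with
  | nil => simp [conj, md]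
  | cons φ l ih => simp_all [conj, md]

lemma md_disj_le {d : ℕ} {l : List (PLQ P ι)} (h : ∀ φ ∈ l, φ.md ≤ d) : (disj l).md ≤ d := by
  induction l with
  | nil => simp [disj, md]
  | cons φ l ih => simp_all [disj, md]

end PLQ

namespace Kripke

variable {P V ι : Type} (K : Kripke P V) (Q : ι → ℕ → ℕ → Prop)

lemma satQ_conj (l : List (PLQ P ι)) (u : V) :
    K.SatQ Q (PLQ.conj l) u ↔ ∀ φ ∈ l, K.SatQ Q φ u := by
  induction l with
  | nil => simp [PLQ.conj, SatQ]
  | cons φ l ih => simp_all [PLQ.conj, SatQ]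

lemma satQ_disj (l : List (PLQ P ι)) (u : V) :
    K.SatQ Q (PLQ.disj l) u ↔ ∃ φ ∈ l, K.SatQ Q φ u := by
  induction l with
  | nil => simp [PLQ.disj, SatQ]
  | cons φ l ih => simp_all [PLQ.disj, SatQ]

def DepthEquiv (d : ℕ) (a b : V) : Prop :=
  ∀ φ : PLQ P ι, φ.md ≤ d → (K.SatQ Q φ a ↔ K.SatQ Q φ b)

lemma depthEquiv_equivalence (d : ℕ) : Equivalence (K.DepthEquiv Q d) where
  refl _ _ _ := Iff.rfl
  symm h φ hφ := (h φ hφ).symm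
  trans h h' φ hφ := (h φ hφ).trans (h' φ hφ)

def succSat (E : V → V → Prop) (S : Set V) (w : V) : Set V :=
  {u | u ∈ K.succ w ∧ ∃ x ∈ S, E x u}

/-- One step of partition refinement: `CharSat K Q (d + 1)` is `K.Refine Q (CharSat K Q d)`. -/
def Refine (E : V → V → Prop) (a b : V) : Prop :=
  (∀ p, K.label a p ↔ K.label b p) ∧
    ∀ (i : ι) (S : Set V),
      (Q i (K.succ a).card (K.succSat E S a).ncard ↔ Q i (K.succ b).card (K.succSat E S b).ncard)

variable {K Q}

lemma succSat_eq_coe_filter (E : V → V → Prop) (S : Set V) (w : V)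
    [DecidablePred fun z => ∃ x ∈ S, E x z] :
    K.succSat E S w = ↑((K.succ w).filter fun z => ∃ x ∈ S, E x z) := by
  rw [Finset.coe_filter]
  rfl

lemma depthEquiv_of_label_of_app {d : ℕ} {a b : V} (hlabel : ∀ p, K.label a p ↔ K.label b p)
    (happ : ∀ (i : ι) (ψ : PLQ P ι), ψ.md < d →
      (K.SatQ Q (.app i ψ) a ↔ K.SatQ Q (.app i ψ) b)) :
    K.DepthEquiv Q d a b := by
  intro φ hφ
  induction φ with
  | bot => exact Iff.rfl
  | prop p => exact hlabel p
  | neg φ ih => exact not_congr (ih hφ)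
  | and φ ψ ih ih' =>
    simp only [PLQ.md, max_le_iff] at hφ
    exact and_congr (ih hφ.1) (ih' hφ.2)
  | or φ ψ ih ih' =>
    simp only [PLQ.md, max_le_iff] at hφ
    exact or_congr (ih hφ.1) (ih' hφ.2)
  | app i φ _ => exact happ i φ hφ

lemma depthEquiv_zero_iff {a b : V} :
    K.DepthEquiv Q 0 a b ↔ ∀ p, K.label a p ↔ K.label b p :=
  ⟨fun h p => h (.prop p) le_rfl,
    fun h => depthEquiv_of_label_of_app h fun _ _ hψ => absurd hψ (Nat.not_lt_zero _)⟩

lemma exists_separating_formula (d : ℕ) (x y : V) :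
    ∃ φ : PLQ P ι, φ.md ≤ d ∧ K.SatQ Q φ x ∧ (K.SatQ Q φ y → K.DepthEquiv Q d x y) := by
  by_cases hxy : K.DepthEquiv Q d x y
  · exact ⟨.neg .bot, Nat.zero_le _, not_false, fun _ => hxy⟩
  · simp only [DepthEquiv, not_forall] at hxy
    obtain ⟨φ, hφ, hne⟩ := hxy
    by_cases hx : K.SatQ Q φ x
    · exact ⟨φ, hφ, hx, fun hy => absurd (iff_of_true hx hy) hne⟩
    · exact ⟨.neg φ, hφ, hx, fun hy => absurd (iff_of_false hx hy) hne⟩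

lemma exists_formula_iff_depthEquiv (d : ℕ) (T : Finset V) (x : V) :
    ∃ χ : PLQ P ι, χ.md ≤ d ∧ ∀ u ∈ T, (K.SatQ Q χ u ↔ K.DepthEquiv Q d x u) := by
  choose sep hmd hx hsep using exists_separating_formula (K := K) (Q := Q) d x
  refine ⟨PLQ.conj (T.toList.map sep), PLQ.md_conj_le (List.forall_mem_map.mpr fun y _ => hmd y),
    fun u hu => ?_⟩
  simp only [satQ_conj, List.forall_mem_map, Finset.mem_toList]
  exact ⟨fun h => hsep u (h u hu), fun hxu y _ => hxu _ (hmd y) |>.mp (hx y)⟩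

lemma exists_formula_iff_exists_depthEquiv (d : ℕ) (T : Finset V) (S : Set V) :
    ∃ ψ : PLQ P ι, ψ.md ≤ d ∧ ∀ u ∈ T, (K.SatQ Q ψ u ↔ ∃ x ∈ S, K.DepthEquiv Q d x u) := by
  classical
  choose χ hmd hχ using exists_formula_iff_depthEquiv (K := K) (Q := Q) d T
  have hE := depthEquiv_equivalence K Q d
  refine ⟨PLQ.disj (((T.filter fun y => ∃ x ∈ S, K.DepthEquiv Q d x y).toList.map χ)),
    PLQ.md_disj_le (List.forall_mem_map.mpr fun y _ => hmd y), fun u hu => ?_⟩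
  simp only [satQ_disj, List.mem_map, Finset.mem_toList, Finset.mem_filter]
  constructor
  · rintro ⟨_, ⟨y, ⟨-, x, hxS, hxy⟩, rfl⟩, hχu⟩
    exact ⟨x, hxS, hE.trans hxy ((hχ y u hu).mp hχu)⟩
  · rintro ⟨x, hxS, hxu⟩
    exact ⟨χ u, ⟨u, ⟨hu, x, hxS, hxu⟩, rfl⟩, (hχ u u hu).mpr (hE.refl u)⟩

lemma satQ_app_iff_ncard_succSat {E : V → V → Prop} {S : Set V} {w : V} {i : ι}
    {ψ : PLQ P ι} (h : ∀ u ∈ K.succ w, K.SatQ Q ψ u ↔ ∃ x ∈ S, E x u) :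
    K.SatQ Q (.app i ψ) w ↔ Q i (K.succ w).card (K.succSat E S w).ncard := by
  have hset : {u | u ∈ K.succ w ∧ K.SatQ Q ψ u} = K.succSat E S w := by
    ext u
    exact and_congr_right (h u)
  simp only [SatQ, hset]

lemma depthEquiv_succ_iff {d : ℕ} {a b : V} :
    K.DepthEquiv Q (d + 1) a b ↔ K.Refine Q (K.DepthEquiv Q d) a b := by
  classical
  constructor
  · intro h
    refine ⟨fun p => h (.prop p) (Nat.zero_le _), fun i S => ?_⟩
    obtain ⟨ψ, hψ, hdef⟩ :=
      exists_formula_iff_exists_depthEquiv (K := K) (Q := Q) d (K.succ a ∪ K.succ b) S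
    rw [← satQ_app_iff_ncard_succSat fun u hu => hdef u (Finset.mem_union_left _ hu),
      ← satQ_app_iff_ncard_succSat fun u hu => hdef u (Finset.mem_union_right _ hu)]
    exact h (.app i ψ) (Nat.succ_le_succ hψ)
  · rintro ⟨hlabel, hcount⟩
    refine depthEquiv_of_label_of_app hlabel fun i ψ hψ => ?_
    have hdef : ∀ u, K.SatQ Q ψ u ↔ ∃ x ∈ {x | K.SatQ Q ψ x}, K.DepthEquiv Q d x u :=
      fun u => ⟨fun hu => ⟨u, hu, (depthEquiv_equivalence K Q d).refl u⟩,
        fun ⟨x, hx, hxu⟩ => (hxu ψ (Nat.lt_succ_iff.mp hψ)).mp hx⟩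
    rw [satQ_app_iff_ncard_succSat fun u _ => hdef u, satQ_app_iff_ncard_succSat fun u _ => hdef u]
    exact hcount i _

end Kripke

lemma charSat_eq_depthEquiv {P V ι : Type} (K : Kripke P V) (Q : ι → ℕ → ℕ → Prop) (d : ℕ) :
    CharSat K Q d = K.DepthEquiv Q d := by
  induction d with
  | zero => ext a b; exact Kripke.depthEquiv_zero_iff.symm
  | succ d ih =>
    ext a b
    change K.Refine Q (CharSat K Q d) a b ↔ _
    rw [ih, Kripke.depthEquiv_succ_iff]

namespace Kripke

variable {P V ι : Type} [DecidableEq V] (K : Kripke P V) (Q : ι → ℕ → ℕ → Prop)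

/-- A round of the game in which the attacker plays on the pebble at `u`, given that `R x y`
means that the attacker wins the remaining rounds from position `(x, y)`. -/
def AttackRound (R : V → V → Prop) (u v : V) : Prop :=
  ∃ (i : ι) (X P' : Finset V), X ⊆ K.succ u ∧ Q i (K.succ u).card X.card ∧
    P' ⊆ K.succ v ∧
    (∀ x ∈ X, ∀ y ∈ K.succ u \ X, R x y) ∧
    (∀ y ∈ P', ∀ x ∈ K.succ u, R x y) ∧
    (∀ X' : Finset V, X' ⊆ K.succ v → Q i (K.succ v).card X'.card → P' ⊆ X' →
      (∃ y ∈ X', ∃ z ∈ K.succ v \ X', ¬ R y z) ∨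
      (∃ y ∈ K.succ v \ X', ∃ x ∈ X, ¬ R x y) ∨
      (∃ y ∈ X', ∀ x, (x ∈ X ∨ x ∈ P') → R x y))

variable {K Q}

lemma attWin_succ_iff {d : ℕ} {a b : V} :
    AttWin K Q (d + 1) a b ↔ (¬ ∀ p, K.label a p ↔ K.label b p) ∨
      K.AttackRound Q (AttWin K Q d) a b ∨ K.AttackRound Q (AttWin K Q d) b a := by
  rw [AttWin]
  constructor
  · rintro (hlabel | ⟨u, v, huv, hround⟩)
    · exact .inl hlabel
    · rcases huv with huv | huv <;> obtain ⟨rfl, rfl⟩ := Prod.mk.inj huv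
      exacts [.inr (.inl hround), .inr (.inr hround)]
  · rintro (hlabel | hround | hround)
    · exact .inl hlabel
    · exact .inr ⟨a, b, .inl rfl, hround⟩
    · exact .inr ⟨b, a, .inr rfl, hround⟩

/-- The `E`-saturation of the attacker's `X ∪ P'` meets the successors of `u` exactly in `X`,
and its trace on the successors of `v` is a reply against which every option of the attacker
fails. -/
lemma exists_separating_count_of_attackRound {E : V → V → Prop} (hE : Equivalence E) {u v : V}
    (h : K.AttackRound Q (fun x y => ¬ E x y) u v) :
    ∃ (i : ι) (S : Set V), Q i (K.succ u).card (K.succSat E S u).ncard ∧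
      ¬ Q i (K.succ v).card (K.succSat E S v).ncard := by
  classical
  obtain ⟨i, X, P', hX, hQ, hP', hXclosed, hP'new, hreply⟩ := h
  set S : Set V := {x | x ∈ X ∨ x ∈ P'}
  have hSu : K.succSat E S u = X := by
    ext z
    refine ⟨?_, fun hz => ⟨hX hz, z, .inl hz, hE.refl z⟩⟩
    rintro ⟨hz, x, hx | hx, hxz⟩
    · by_contra hzX
      exact hXclosed x hx z (Finset.mem_sdiff.mpr ⟨hz, hzX⟩) hxz
    · exact absurd (hE.symm hxz) (hP'new x hx z hz)
  refine ⟨i, S, by rwa [hSu, Set.ncard_coe_finset], fun hQ' => ?_⟩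
  rw [succSat_eq_coe_filter, Set.ncard_coe_finset] at hQ'
  have hP'X' : P' ⊆ (K.succ v).filter fun z => ∃ x ∈ S, E x z :=
    fun y hy => Finset.mem_filter.mpr ⟨hP' hy, y, .inr hy, hE.refl y⟩
  simp only [not_not] at hreply
  rcases hreply _ (Finset.filter_subset _ _) hQ' hP'X' with
    ⟨y, hy, z, hz, hyz⟩ | ⟨y, hy, x, hx, hxy⟩ | ⟨y, hy, hnone⟩
  · obtain ⟨-, x, hxS, hxy⟩ := Finset.mem_filter.mp hy
    rw [Finset.mem_sdiff, Finset.mem_filter] at hz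
    exact hz.2 ⟨hz.1, x, hxS, hE.trans hxy hyz⟩
  · rw [Finset.mem_sdiff, Finset.mem_filter] at hy
    exact hy.2 ⟨hy.1, x, .inl hx, hxy⟩
  · obtain ⟨-, x, hxS, hxy⟩ := Finset.mem_filter.mp hy
    exact hnone x hxS hxy

/-- The attacker chooses the saturated successors of `u` and the saturated successors of `v`
without a partner among the successors of `u`; any reply other than the saturated successors
of `v` can then be refuted. -/
lemma attackRound_of_separating_count {E : V → V → Prop} (hE : Equivalence E) {u v : V} {i : ι}
    {S : Set V} (hu : Q i (K.succ u).card (K.succSat E S u).ncard)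
    (hv : ¬ Q i (K.succ v).card (K.succSat E S v).ncard) :
    K.AttackRound Q (fun x y => ¬ E x y) u v := by
  classical
  set A : V → Prop := fun z => ∃ x ∈ S, E x z
  have hA : ∀ {x y}, A x → E x y → A y := fun ⟨s, hs, hsx⟩ hxy => ⟨s, hs, hE.trans hsx hxy⟩
  rw [succSat_eq_coe_filter, Set.ncard_coe_finset] at hu hv
  refine ⟨i, (K.succ u).filter A, (K.succ v).filter fun y => A y ∧ ∀ x ∈ K.succ u, ¬ E x y,
    Finset.filter_subset _ _, hu, Finset.filter_subset _ _, ?_, ?_, ?_⟩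
  · intro x hx y hy hxy
    rw [Finset.mem_sdiff, Finset.mem_filter] at hy
    exact hy.2 ⟨hy.1, hA (Finset.mem_filter.mp hx).2 hxy⟩
  · intro y hy
    exact (Finset.mem_filter.mp hy).2.2
  · intro X' hX' hQ' hP'X'
    by_contra! hrefuted
    obtain ⟨-, hnew, hold⟩ := hrefuted
    suffices hX'eq : X' = (K.succ v).filter A from hv (hX'eq ▸ hQ')
    ext y
    constructor
    · intro hy
      obtain ⟨x, hx, hxy⟩ := hold y hy
      refine Finset.mem_filter.mpr ⟨hX' hy, hA ?_ hxy⟩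
      rcases hx with hx | hx
      exacts [(Finset.mem_filter.mp hx).2, (Finset.mem_filter.mp hx).2.1]
    · intro hy
      obtain ⟨hyv, hAy⟩ := Finset.mem_filter.mp hy
      by_contra hyX'
      by_cases hpartner : ∃ x ∈ K.succ u, E x y
      · obtain ⟨x, hxu, hxy⟩ := hpartner
        exact hnew y (Finset.mem_sdiff.mpr ⟨hyv, hyX'⟩) x
          (Finset.mem_filter.mpr ⟨hxu, hA hAy (hE.symm hxy)⟩) hxy
      · simp only [not_exists, not_and] at hpartner
        exact hyX' (hP'X' (Finset.mem_filter.mpr ⟨hyv, hAy, hpartner⟩))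

lemma attackRound_iff {E : V → V → Prop} (hE : Equivalence E) {u v : V} :
    K.AttackRound Q (fun x y => ¬ E x y) u v ↔
      ∃ (i : ι) (S : Set V), Q i (K.succ u).card (K.succSat E S u).ncard ∧
        ¬ Q i (K.succ v).card (K.succSat E S v).ncard :=
  ⟨exists_separating_count_of_attackRound hE,
    fun ⟨_, _, hu, hv⟩ => attackRound_of_separating_count hE hu hv⟩

lemma attWin_succ_iff_not_refine {E : V → V → Prop} (hE : Equivalence E) {d : ℕ}
    (hd : AttWin K Q d = fun x y => ¬ E x y) {a b : V} :
    AttWin K Q (d + 1) a b ↔ ¬ K.Refine Q E a b := by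
  rw [attWin_succ_iff, hd, attackRound_iff hE, attackRound_iff hE, Refine]
  constructor
  · rintro (hlabel | ⟨i, S, ha, hb⟩ | ⟨i, S, hb, ha⟩) ⟨hlabel', hcount⟩
    exacts [hlabel hlabel', hb ((hcount i S).mp ha), ha ((hcount i S).mpr hb)]
  · intro h
    by_contra! hwin
    obtain ⟨hlabel, hab, hba⟩ := hwin
    exact h ⟨hlabel, fun i S => ⟨hab i S, hba i S⟩⟩

end Kripke

lemma attWin_iff_not_depthEquiv {P V ι : Type} [DecidableEq V] (K : Kripke P V)
    (Q : ι → ℕ → ℕ → Prop) (d : ℕ) (a b : V) :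
    AttWin K Q d a b ↔ ¬ K.DepthEquiv Q d a b := by
  induction d generalizing a b with
  | zero => exact not_congr Kripke.depthEquiv_zero_iff.symm
  | succ d ih =>
    rw [Kripke.attWin_succ_iff_not_refine (K.depthEquiv_equivalence Q d) (funext₂ fun x y =>
      propext (ih x y)), Kripke.depthEquiv_succ_iff]

lemma Kripke.satQ_map_iff {P V V' ι : Type} {K : Kripke P V} {K' : Kripke P V'}
    {Q : ι → ℕ → ℕ → Prop} (f : V ↪ V') (hsucc : ∀ v, K'.succ (f v) = (K.succ v).map f)
    (hlabel : ∀ v p, K'.label (f v) p ↔ K.label v p) (φ : PLQ P ι) (v : V) :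
    K'.SatQ Q φ (f v) ↔ K.SatQ Q φ v := by
  induction φ generalizing v with
  | bot => exact Iff.rfl
  | prop p => exact hlabel v p
  | neg φ ih => exact not_congr (ih v)
  | and φ ψ ih ih' => exact and_congr (ih v) (ih' v)
  | or φ ψ ih ih' => exact or_congr (ih v) (ih' v)
  | app i φ ih =>
    have hset : {u | u ∈ (K.succ v).map f ∧ K'.SatQ Q φ u} =
        f '' {u | u ∈ K.succ v ∧ K.SatQ Q φ u} := by
      ext u
      simp only [Finset.mem_map, Set.mem_ofPred_eq, Set.mem_image]
      constructor
      · rintro ⟨⟨x, hx, rfl⟩, hφ⟩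
        exact ⟨x, ⟨hx, (ih x).mp hφ⟩, rfl⟩
      · rintro ⟨x, ⟨hx, hφ⟩, rfl⟩
        exact ⟨⟨x, hx, rfl⟩, (ih x).mpr hφ⟩
    simp only [Kripke.SatQ, hset, hsucc, Finset.card_map,
      Set.ncard_image_of_injective _ f.injective]

theorem game_formulas_charSat_tfae_general
    {P V W ι : Type} [DecidableEq V] [DecidableEq W]
    (M : Kripke P V) (N : Kripke P W) (Q : ι → ℕ → ℕ → Prop) (w : V) (v : W) (d : ℕ) :
    (DefWin (M.sum N) Q d (Sum.inl w) (Sum.inr v) ↔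
      ∀ φ : PLQ P ι, φ.md ≤ d → (M.SatQ Q φ w ↔ N.SatQ Q φ v)) ∧
    ((∀ φ : PLQ P ι, φ.md ≤ d → (M.SatQ Q φ w ↔ N.SatQ Q φ v)) ↔
      CharSat (M.sum N) Q d (Sum.inl w) (Sum.inr v)) := by
  have hinl (φ : PLQ P ι) : (M.sum N).SatQ Q φ (.inl w) ↔ M.SatQ Q φ w :=
    Kripke.satQ_map_iff .inl (fun _ => rfl) (fun _ _ => Iff.rfl) φ w
  have hinr (φ : PLQ P ι) : (M.sum N).SatQ Q φ (.inr v) ↔ N.SatQ Q φ v :=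
    Kripke.satQ_map_iff .inr (fun _ => rfl) (fun _ _ => Iff.rfl) φ v
  have hequiv : (M.sum N).DepthEquiv Q d (.inl w) (.inr v) ↔
      ∀ φ : PLQ P ι, φ.md ≤ d → (M.SatQ Q φ w ↔ N.SatQ Q φ v) := by
    simp only [Kripke.DepthEquiv, hinl, hinr]
  rw [DefWin, attWin_iff_not_depthEquiv, not_not, charSat_eq_depthEquiv, hequiv]
  exact ⟨Iff.rfl, Iff.rfl⟩

/-- for all pointed Kripke models `(M,w)`, `(N,v)`, every family `𝒬` of
generalized modalities and every `d`, the following are equivalent: (1) Player 2 has a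
winning strategy in the `d`-round `𝒬`-bisimulation game; (2) `(M,w)` and `(N,v)`
satisfy the same `PL(𝒬)` formulas of modal depth at most `d`; (3) `N,v` satisfies the
canonical `𝒬`-characteristic depth-`d` formula of `w` computed in `M ⊔ N`. -/
theorem game_formulas_charSat_tfae
    {P V W ι : Type} [Fintype V] [Fintype W] [DecidableEq V] [DecidableEq W]
    (M : Kripke P V) (N : Kripke P W) (Q : ι → ℕ → ℕ → Prop) (w : V) (v : W) (d : ℕ) :
    (DefWin (M.sum N) Q d (Sum.inl w) (Sum.inr v) ↔
      ∀ φ : PLQ P ι, φ.md ≤ d → (M.SatQ Q φ w ↔ N.SatQ Q φ v)) ∧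
    ((∀ φ : PLQ P ι, φ.md ≤ d → (M.SatQ Q φ w ↔ N.SatQ Q φ v)) ↔
      CharSat (M.sum N) Q d (Sum.inl w) (Sum.inr v)) :=
  game_formulas_charSat_tfae_general M N Q w v d
end
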